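/- Suppose k ≥ 2 is even and set s = k/2. If a is even with 2 ≤ a ≤ r−2, then z^{(a)}_{s−1} = z^{(a)}_{s+1}. -/

import Mathlib

/-- Orthogonal coordinates `u_i(λ)` of `λ + ρ` for the weight
`λ = λ_1 ω_1 + ⋯ + λ_r ω_r` of `D_r` given in fundamental-weight coordinates. -/
noncomputable def uCoord (r : ℕ) (lam : ℕ → ℤ) (i : ℕ) : ℝ :=
  if i = r then ((lam r : ℝ) - (lam (r - 1) : ℝ)) / 2
  else (∑ j ∈ Finset.Icc i (r - 2), (lam j : ℝ))
      + ((lam (r - 1) : ℝ) + (lam r : ℝ)) / 2 + ((r : ℝ) - (i : ℝ))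

/-- The level-`k` quantum dimension of the weight `λ` of `D_r`
(`h = 2r - 2` is the Coxeter number), given by the product over the
positive roots `e_i - e_j`, `e_i + e_j` (`1 ≤ i < j ≤ r`). -/
noncomputable def qdimD (r k : ℕ) (lam : ℕ → ℤ) : ℝ :=
  ∏ p ∈ (Finset.Icc 1 r ×ˢ Finset.Icc 1 r).filter (fun p => p.1 < p.2),
    (Real.sin (Real.pi * (uCoord r lam p.1 - uCoord r lam p.2) / (2 * (r : ℝ) - 2 + (k : ℝ)))
      * Real.sin (Real.pi * (uCoord r lam p.1 + uCoord r lam p.2) / (2 * (r : ℝ) - 2 + (k : ℝ))))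
    / (Real.sin (Real.pi * ((p.2 : ℝ) - (p.1 : ℝ)) / (2 * (r : ℝ) - 2 + (k : ℝ)))
      * Real.sin (Real.pi * (2 * (r : ℝ) - (p.1 : ℝ) - (p.2 : ℝ)) / (2 * (r : ℝ) - 2 + (k : ℝ))))

/-- The quantum dimension solution `z^{(a)}_m` of the `Q`-system of type `D_r`:
the specialization `Q^{(a)}_m(ρ/(h+k))` of the classical characters of the
Kirillov–Reshetikhin modules of type `D_r`. -/
noncomputable def zD (r k a m : ℕ) : ℝ :=
  if a = r - 1 ∨ a = r then
    qdimD r k (fun j => if j = a then (m : ℤ) else 0)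
  else if a % 2 = 1 then
    ∑ c ∈ (Fintype.piFinset (fun _ : Fin ((a + 1) / 2) => Finset.range (m + 1))).filter
        (fun c => ∑ i, c i = m),
      qdimD r k (fun j => ∑ i : Fin ((a + 1) / 2), if j = 2 * (i : ℕ) + 1 then (c i : ℤ) else 0)
  else
    ∑ c ∈ (Fintype.piFinset (fun _ : Fin (a / 2) => Finset.range (m + 1))).filter
        (fun c => ∑ i, c i ≤ m),
      qdimD r k (fun j => ∑ i : Fin (a / 2), if j = 2 * (i : ℕ) + 2 then (c i : ℤ) else 0)

/-! Write `s = k/2` and `N = h + k = 2r - 2 + 2s`. For even `a`, `z^{(a)}_m` sums `D(λ_c)` over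
the weights `λ_c = ∑ c_i ω_{2i+2}` with `|c| ≤ m`, so `z^{(a)}_{s+1} - z^{(a)}_{s-1}` is the sum
over `|c| ∈ {s, s+1}`. If `|c| = s + 1` and `λ_c` has no `ω_2`-component, then `u_1 + u_3 = N`
and a sine factor of `D(λ_c)` vanishes. If `|c| = s`, adding `ω_2` to `λ_c` acts on the
coordinates of `λ_c + ρ` as the affine reflection `(u_1, u_2) ↦ (N - u_2, N - u_1)`, which
changes the sign of `D`; and it maps the tuples with `|c| = s` bijectively onto the remaining
tuples with `|c| = s + 1`. So these terms cancel in pairs. -/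

open Finset

def rootPairs (r : ℕ) : Finset (ℕ × ℕ) :=
  (Icc 1 r ×ˢ Icc 1 r).filter (fun p => p.1 < p.2)

lemma mem_rootPairs {r : ℕ} {p : ℕ × ℕ} :
    p ∈ rootPairs r ↔ 1 ≤ p.1 ∧ p.1 < p.2 ∧ p.2 ≤ r := by
  simp only [rootPairs, mem_filter, mem_product, mem_Icc]
  omega

lemma prod_rootPairs_swap {R : Type*} [CommRing R] {r : ℕ} (hr : 2 ≤ r) (g : ℕ → ℕ → R)
    (hg : g 2 1 = -g 1 2) :
    ∏ p ∈ rootPairs r, g (Equiv.swap 1 2 p.1) (Equiv.swap 1 2 p.2)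
      = -∏ p ∈ rootPairs r, g p.1 p.2 := by
  set σ : Equiv.Perm ℕ := Equiv.swap 1 2
  have h12 : ((1, 2) : ℕ × ℕ) ∈ rootPairs r := mem_rootPairs.2 (by omega)
  have hσ : ∀ p ∈ (rootPairs r).erase (1, 2), (σ p.1, σ p.2) ∈ (rootPairs r).erase (1, 2) := by
    rintro ⟨i, j⟩ hp
    simp only [mem_erase, ne_eq, Prod.ext_iff, mem_rootPairs] at hp ⊢
    simp only [σ, Equiv.swap_apply_def]
    split_ifs <;> omega
  have hrest : ∏ p ∈ (rootPairs r).erase (1, 2), g (σ p.1) (σ p.2)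
      = ∏ p ∈ (rootPairs r).erase (1, 2), g p.1 p.2 :=
    prod_nbij' (fun p => (σ p.1, σ p.2)) (fun p => (σ p.1, σ p.2)) hσ hσ
      (fun p _ => by simp [σ]) (fun p _ => by simp [σ]) (fun p _ => rfl)
  rw [← mul_prod_erase _ _ h12, ← mul_prod_erase _ _ h12, hrest]
  simp only [σ, Equiv.swap_apply_left, Equiv.swap_apply_right, hg, neg_mul]

lemma sum_antidiagonalTuple_succ {M : Type*} [AddCommMonoid M] {n : ℕ}
    (f : (Fin n → ℕ) → M) (i : Fin n) (m : ℕ) :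
    ∑ c ∈ Nat.antidiagonalTuple n (m + 1), f c
      = ∑ c ∈ (Nat.antidiagonalTuple n (m + 1)).filter (fun c => c i = 0), f c
        + ∑ c ∈ Nat.antidiagonalTuple n m, f (c + Pi.single i 1) := by
  have hsum : ∀ c : Fin n → ℕ, ∑ t, (c + Pi.single i 1 : Fin n → ℕ) t = ∑ t, c t + 1 := by
    intro c
    simp [sum_add_distrib]
  have himage : (Nat.antidiagonalTuple n (m + 1)).filter (fun c => c i ≠ 0)
      = (Nat.antidiagonalTuple n m).image (· + Pi.single i 1) := by
    ext c
    simp only [mem_filter, mem_image, Nat.mem_antidiagonalTuple]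
    constructor
    · rintro ⟨hc, hci⟩
      have hc' : c = (c - Pi.single i 1) + Pi.single i 1 := by
        ext t
        by_cases ht : t = i
        · subst ht; simp; omega
        · simp [ht]
      refine ⟨c - Pi.single i 1, ?_, hc'.symm⟩
      have := hsum (c - Pi.single i 1)
      rw [← hc'] at this
      omega
    · rintro ⟨d, hd, rfl⟩
      exact ⟨by rw [hsum, hd], by simp⟩
  rw [← sum_filter_add_sum_filter_not _ (fun c => c i = 0), himage,
    sum_image (fun c _ d _ h => add_right_cancel h)]

lemma sum_filter_sum_le_eq_sum_antidiagonalTuple {M : Type*} [AddCommMonoid M] {n : ℕ}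
    (f : (Fin n → ℕ) → M) (m : ℕ) :
    ∑ c ∈ (Fintype.piFinset (fun _ : Fin n => range (m + 1))).filter (fun c => ∑ i, c i ≤ m), f c
      = ∑ j ∈ range (m + 1), ∑ c ∈ Nat.antidiagonalTuple n j, f c := by
  rw [← sum_fiberwise_of_maps_to (g := fun c => ∑ i, c i) (t := range (m + 1))
    (fun c hc => by simp only [mem_filter] at hc; exact mem_range.2 (by omega))]
  refine sum_congr rfl fun j hj => sum_congr ?_ fun _ _ => rfl
  ext c
  simp only [mem_filter, Fintype.mem_piFinset, mem_range, Nat.mem_antidiagonalTuple] at hj ⊢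
  constructor
  · exact fun h => h.2
  · rintro rfl
    have hle : ∀ t, c t ≤ ∑ i, c i := fun t => single_le_sum (fun _ _ => Nat.zero_le _) (mem_univ t)
    exact ⟨⟨fun t => by have := hle t; omega, by omega⟩, rfl⟩

lemma sum_filter_sum_le_sub_one_eq_add_one {M : Type*} [AddCommGroup M] {n : ℕ}
    (f : (Fin n → ℕ) → M) (i : Fin n) {s : ℕ} (hs : 1 ≤ s)
    (hzero : ∀ c : Fin n → ℕ, ∑ t, c t = s + 1 → c i = 0 → f c = 0)
    (hneg : ∀ c : Fin n → ℕ, ∑ t, c t = s → f (c + Pi.single i 1) = -f c) :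
    ∑ c ∈ (Fintype.piFinset (fun _ : Fin n => range (s - 1 + 1))).filter
        (fun c => ∑ t, c t ≤ s - 1), f c
      = ∑ c ∈ (Fintype.piFinset (fun _ : Fin n => range (s + 1 + 1))).filter
        (fun c => ∑ t, c t ≤ s + 1), f c := by
  obtain ⟨s, rfl⟩ : ∃ t, s = t + 1 := ⟨s - 1, by omega⟩
  have htop : ∑ c ∈ Nat.antidiagonalTuple n (s + 2), f c
      = -∑ c ∈ Nat.antidiagonalTuple n (s + 1), f c := by
    rw [sum_antidiagonalTuple_succ f i (s + 1), sum_eq_zero, zero_add, ← sum_neg_distrib]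
    · exact sum_congr rfl fun c hc => hneg c (Nat.mem_antidiagonalTuple.1 hc)
    · intro c hc
      rw [mem_filter, Nat.mem_antidiagonalTuple] at hc
      exact hzero c hc.1 hc.2
  rw [sum_filter_sum_le_eq_sum_antidiagonalTuple, sum_filter_sum_le_eq_sum_antidiagonalTuple,
    Nat.add_sub_cancel, sum_range_succ _ (s + 2), sum_range_succ _ (s + 1), htop]
  abel

lemma sin_sub_mul_sin_add_div (x y N : ℝ) :
    Real.sin (Real.pi * (x - y) / N) * Real.sin (Real.pi * (x + y) / N)
      = (Real.cos (2 * Real.pi * y / N) - Real.cos (2 * Real.pi * x / N)) / 2 := by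
  rw [Real.cos_sub_cos,
    show (2 * Real.pi * y / N + 2 * Real.pi * x / N) / 2 = Real.pi * (x + y) / N by ring,
    show (2 * Real.pi * y / N - 2 * Real.pi * x / N) / 2 = -(Real.pi * (x - y) / N) by ring,
    Real.sin_neg]
  ring

lemma qdimD_eq_zero_of_uCoord_add_eq {r k i j : ℕ} {lam : ℕ → ℤ} (hij : 1 ≤ i ∧ i < j ∧ j ≤ r)
    (h : uCoord r lam i + uCoord r lam j = 2 * r - 2 + k) :
    qdimD r k lam = 0 := by
  refine prod_eq_zero (i := (i, j)) (mem_rootPairs.2 hij) ?_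
  rw [h]
  rcases eq_or_ne (2 * (r : ℝ) - 2 + k) 0 with hN | hN
  · simp [hN]
  · simp [mul_div_assoc, div_self hN]

lemma qdimD_eq_neg_of_uCoord_reflect {r k : ℕ} (hr : 2 ≤ r) {lam lam' : ℕ → ℤ}
    (h1 : uCoord r lam' 1 + uCoord r lam 2 = 2 * r - 2 + k)
    (h2 : uCoord r lam' 2 + uCoord r lam 1 = 2 * r - 2 + k)
    (hj : ∀ j, 3 ≤ j → j ≤ r → uCoord r lam' j = uCoord r lam j) :
    qdimD r k lam' = -qdimD r k lam := by
  set N : ℝ := 2 * r - 2 + k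
  have hN : N ≠ 0 := by
    have : (2 : ℝ) ≤ r := by exact_mod_cast hr
    have : (0 : ℝ) ≤ k := k.cast_nonneg
    exact (show 0 < N by linarith).ne'
  have hcos : ∀ x y : ℝ, x + y = N →
      Real.cos (2 * Real.pi * x / N) = Real.cos (2 * Real.pi * y / N) := by
    intro x y hxy
    rw [eq_sub_of_add_eq' hxy, mul_sub, sub_div, mul_div_assoc _ N, div_self hN, mul_one,
      Real.cos_two_pi_sub]
  -- Each root factor is `(C j - C i) / 2` in the cosines `C i = cos (2π u_i / N)`, and the
  -- reflection merely swaps `C 1` and `C 2`: the numerator is antisymmetric in them.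
  set C : (ℕ → ℤ) → ℕ → ℝ := fun μ i => Real.cos (2 * Real.pi * uCoord r μ i / N)
  have hC : ∀ i, 1 ≤ i → i ≤ r → C lam' i = C lam (Equiv.swap 1 2 i) := by
    intro i hi hir
    simp only [C, Equiv.swap_apply_def]
    split_ifs with hi1 hi2
    · subst hi1; exact hcos _ _ h1
    · subst hi2; exact hcos _ _ h2
    · rw [hj i (by omega) hir]
  unfold qdimD
  rw [prod_div_distrib, prod_div_distrib, ← neg_div]
  congr 1
  calc _ = ∏ p ∈ rootPairs r, (C lam (Equiv.swap 1 2 p.2) - C lam (Equiv.swap 1 2 p.1)) / 2 := by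
        refine prod_congr rfl fun p hp => ?_
        rw [mem_rootPairs] at hp
        rw [sin_sub_mul_sin_add_div, ← hC p.1 (by omega) (by omega),
          ← hC p.2 (by omega) (by omega)]
    _ = -∏ p ∈ rootPairs r, (C lam p.2 - C lam p.1) / 2 :=
        prod_rootPairs_swap hr (fun i j => (C lam j - C lam i) / 2) (by ring)
    _ = _ := by
        congr 1
        exact prod_congr rfl fun p _ => (sin_sub_mul_sin_add_div _ _ _).symm

lemma uCoord_eq_uCoord_succ_add {r i : ℕ} (lam : ℕ → ℤ) (h : i + 2 ≤ r) :
    uCoord r lam i = uCoord r lam (i + 1) + lam i + 1 := by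
  rw [uCoord, uCoord, if_neg (by omega), if_neg (by omega), Icc_eq_cons_Ioc (by omega),
    sum_cons, ← Icc_add_one_left_eq_Ioc]
  push_cast
  ring

lemma uCoord_add_single {r a : ℕ} (lam : ℕ → ℤ) (ha : a + 2 ≤ r) (i : ℕ) :
    uCoord r (lam + Pi.single a 1) i = uCoord r lam i + if i ≤ a then 1 else 0 := by
  have hr1 : r - 1 ≠ a := by omega
  have hr : r ≠ a := by omega
  have ha' : a ≤ r - 2 := by omega
  unfold uCoord
  simp only [Pi.add_apply, Pi.single_apply, hr1, hr, if_false, add_zero, Int.cast_add,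
    sum_add_distrib]
  split_ifs <;> simp_all [sum_ite_eq', mem_Icc] <;> first | omega | ring

def evenWeight (n : ℕ) (c : Fin n → ℕ) : ℕ → ℤ :=
  fun j => ∑ i : Fin n, if j = 2 * (i : ℕ) + 2 then (c i : ℤ) else 0

section evenWeight

variable {n r k : ℕ} (c : Fin n → ℕ)

lemma evenWeight_eq_zero {j : ℕ} (hj : Odd j ∨ 2 * n < j) : evenWeight n c j = 0 :=
  sum_eq_zero fun t _ => if_neg (by have := t.isLt; rcases hj with ⟨m, rfl⟩ | hj <;> omega)

lemma evenWeight_two (hn : 0 < n) : evenWeight n c 2 = c ⟨0, hn⟩ := by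
  rw [evenWeight, sum_eq_single ⟨0, hn⟩ (fun t _ ht => if_neg ?_) (by simp)]
  · simp
  · exact fun h => ht (Fin.ext (by dsimp; omega))

lemma evenWeight_add_single (i : Fin n) :
    evenWeight n (c + Pi.single i 1) = evenWeight n c + Pi.single (2 * (i : ℕ) + 2) 1 := by
  ext j
  simp only [evenWeight, Pi.add_apply, Nat.cast_add, ite_add_zero, sum_add_distrib, Pi.single_apply]
  congr 1
  rw [sum_eq_single i (fun t _ ht => by simp [ht]) (by simp)]
  simp

lemma uCoord_one_evenWeight (h : 2 * n + 2 ≤ r) :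
    uCoord r (evenWeight n c) 1 = ∑ t, (c t : ℝ) + (r - 1) := by
  rw [uCoord, if_neg (by omega), evenWeight_eq_zero c (Or.inr (by omega)),
    evenWeight_eq_zero c (Or.inr (by omega))]
  simp only [evenWeight, Int.cast_sum, Int.cast_ite, Int.cast_natCast, Int.cast_zero, add_zero,
    zero_div, Nat.cast_one]
  rw [sum_comm]
  refine congrArg (· + _) (sum_congr rfl fun t _ => ?_)
  rw [sum_ite_eq' (Icc 1 (r - 2)) (2 * (t : ℕ) + 2), if_pos (mem_Icc.2 (by omega))]

lemma uCoord_two_evenWeight (hr : 3 ≤ r) (h : 2 * n + 2 ≤ r) :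
    uCoord r (evenWeight n c) 2 = ∑ t, (c t : ℝ) + (r - 2) := by
  have h12 := uCoord_eq_uCoord_succ_add (r := r) (evenWeight n c) (i := 1) (by omega)
  rw [evenWeight_eq_zero c (Or.inl odd_one), uCoord_one_evenWeight c h] at h12
  push_cast at h12
  linarith

lemma qdimD_evenWeight_eq_zero (hn : 0 < n) (h : 2 * n + 2 ≤ r) (hc0 : c ⟨0, hn⟩ = 0)
    (hs : 2 * ∑ t, c t = k + 2) :
    qdimD r k (evenWeight n c) = 0 := by
  refine qdimD_eq_zero_of_uCoord_add_eq (i := 1) (j := 3) ⟨le_rfl, by norm_num, by omega⟩ ?_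
  have h23 := uCoord_eq_uCoord_succ_add (r := r) (evenWeight n c) (i := 2) (by omega)
  rw [evenWeight_two c hn, hc0, uCoord_two_evenWeight c (by omega) h] at h23
  rw [uCoord_one_evenWeight c h]
  have hsR : 2 * ∑ t, (c t : ℝ) = k + 2 := by exact_mod_cast hs
  push_cast at h23
  linarith

lemma qdimD_evenWeight_add_single (hn : 0 < n) (h : 2 * n + 2 ≤ r) (hs : 2 * ∑ t, c t = k) :
    qdimD r k (evenWeight n (c + Pi.single ⟨0, hn⟩ 1)) = -qdimD r k (evenWeight n c) := by
  have hu := uCoord_add_single (r := r) (evenWeight n c) (a := 2) (by omega)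
  have hu1 := uCoord_one_evenWeight c h
  have hu2 := uCoord_two_evenWeight c (by omega) h
  have hsR : 2 * ∑ t, (c t : ℝ) = k := by exact_mod_cast hs
  rw [evenWeight_add_single, show 2 * ((⟨0, hn⟩ : Fin n) : ℕ) + 2 = 2 from rfl]
  refine qdimD_eq_neg_of_uCoord_reflect (by omega) ?_ ?_ fun j hj _ => ?_
  · rw [hu, if_pos (by norm_num), hu1, hu2]
    linarith
  · rw [hu, if_pos le_rfl, hu1, hu2]
    linarith
  · rw [hu, if_neg (by omega), add_zero]

end evenWeight

theorem stmt8_general (r k : ℕ) (hk : 2 ≤ k) (hkev : k % 2 = 0)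
    (a : ℕ) (ha2 : 2 ≤ a) (har : a ≤ r - 2) (haev : a % 2 = 0) :
    zD r k a (k / 2 - 1) = zD r k a (k / 2 + 1) := by
  have hn : 0 < a / 2 := by omega
  have h : 2 * (a / 2) + 2 ≤ r := by omega
  simp only [zD, if_neg (show ¬(a = r - 1 ∨ a = r) by omega), if_neg (show ¬a % 2 = 1 by omega)]
  exact sum_filter_sum_le_sub_one_eq_add_one (fun c => qdimD r k (evenWeight (a / 2) c)) ⟨0, hn⟩
    (by omega) (fun c hs hc0 => qdimD_evenWeight_eq_zero c hn h hc0 (by omega))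
    (fun c hs => qdimD_evenWeight_add_single c hn h (by omega))

/-- For even level `k ≥ 2` with `s = k/2` and even `a` with `2 ≤ a ≤ r-2`,
`z^{(a)}_{s-1} = z^{(a)}_{s+1}`. -/
theorem stmt8 (r k : ℕ) (hr : 4 ≤ r) (hk : 2 ≤ k) (hkev : k % 2 = 0)
    (a : ℕ) (ha2 : 2 ≤ a) (har : a ≤ r - 2) (haev : a % 2 = 0) :
    zD r k a (k / 2 - 1) = zD r k a (k / 2 + 1) :=
  stmt8_general r k hk hkev a ha2 har haev
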